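/- For every integer d2 ≥ 5, one has (d2 + 2)·A(1,d2) > 1 and 3(d2 + 2)·A(1,d2) − 2 − d2·B(1,d2) > 0. -/
import Mathlib


/-- Upper endpoint `A(d1,d2)`. -/
noncomputable def Aval (d1 d2 : ℕ) : ℝ :=
  (d1 : ℝ) / (d1 + d2 * (1 + Real.sqrt (2 * ((d1 : ℝ) + d2) / (d1 * ((d2 : ℝ) - 2))))⁻¹)

/-- Upper endpoint `B(d1,d2)`. -/
noncomputable def Bval (d1 d2 : ℕ) : ℝ :=
  (d1 : ℝ) / (d1 + ((d2 : ℝ) - 2) *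
    (1 + Real.sqrt (2 * ((d1 : ℝ) + d2 - 2) / (d1 * ((d2 : ℝ) - 4))))⁻¹)

theorem coefficient_positivity (d2 : ℕ) (hd2 : 5 ≤ d2) :
    ((d2 : ℝ) + 2) * Aval 1 d2 > 1 ∧
      3 * ((d2 : ℝ) + 2) * Aval 1 d2 - 2 - (d2 : ℝ) * Bval 1 d2 > 0 := by
  have hn : (5:ℝ) ≤ (d2:ℝ) := by exact_mod_cast hd2
  set n : ℝ := (d2:ℝ) with hndef
  set s := Real.sqrt (2 * ((1:ℝ) + n) / ((1:ℝ) * (n - 2))) with hs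
  set t := Real.sqrt (2 * ((1:ℝ) + n - 2) / ((1:ℝ) * (n - 4))) with ht
  have hA : Aval 1 d2 = 1 / (1 + n * (1 + s)⁻¹) := by
    simp [Aval, hs, hndef]
  have hB : Bval 1 d2 = 1 / (1 + (n - 2) * (1 + t)⁻¹) := by
    simp [Bval, ht, hndef]
  have hs1 : 1 < s := by
    rw [hs, Real.lt_sqrt (by norm_num)]
    rw [lt_div_iff₀ (by nlinarith)]
    nlinarith
  have ht0 : 0 ≤ t := Real.sqrt_nonneg _
  have ht3 : t < 3 := by
    rw [ht, show (3:ℝ) = Real.sqrt 9 by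
      rw [show (9:ℝ) = 3 ^ 2 by norm_num, Real.sqrt_sq (by norm_num)]]
    apply Real.sqrt_lt_sqrt
    · apply div_nonneg <;> nlinarith
    · rw [div_lt_iff₀ (by nlinarith)]
      nlinarith
  have hs0 : (0:ℝ) < 1 + s := by linarith
  have ht0' : (0:ℝ) < 1 + t := by linarith
  have hinvs : (1 + s)⁻¹ < 2⁻¹ :=
    inv_strictAnti₀ (by norm_num) (by linarith)
  have hinvt : (4:ℝ)⁻¹ < (1 + t)⁻¹ :=
    inv_strictAnti₀ ht0' (by linarith)
  have hinvs0 : 0 < (1 + s)⁻¹ := inv_pos.mpr hs0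
  have hinvt0 : 0 < (1 + t)⁻¹ := inv_pos.mpr ht0'
  have hDA : (0:ℝ) < 1 + n * (1 + s)⁻¹ := by nlinarith
  have hDB : (0:ℝ) < 1 + (n - 2) * (1 + t)⁻¹ := by nlinarith
  have hAlb : 2 / (n + 2) < Aval 1 d2 := by
    rw [hA, div_lt_div_iff₀ (by linarith) hDA]
    nlinarith
  have hBub : Bval 1 d2 < 4 / (n + 2) := by
    rw [hB, div_lt_div_iff₀ hDB (by linarith)]
    nlinarith
  have h1 : (n + 2) * Aval 1 d2 > 2 := by
    have h := mul_lt_mul_of_pos_left hAlb (show (0:ℝ) < n + 2 by linarith)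
    have e : (n + 2) * (2 / (n + 2)) = 2 := by field_simp
    linarith [e ▸ h]
  have h2 : n * Bval 1 d2 < 4 := by
    have h := mul_lt_mul_of_pos_left hBub (show (0:ℝ) < n by linarith)
    have e : n * (4 / (n + 2)) = 4 * n / (n + 2) := by ring
    have e2 : 4 * n / (n + 2) < 4 := by
      rw [div_lt_iff₀ (by linarith)]; linarith
    linarith [e ▸ h]
  exact ⟨by linarith, by linarith⟩
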